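/- Let (λᵏ, r_k) ∈ ℝᵐ × (0, ∞), let (x^{k+1}, t_{k+1}) ∈ A(λᵏ, r_k) with t_{k+1} > 0, and set λ^{k+1} = λᵏ + (r_k/t_{k+1}) h(x^{k+1}) and r_{k+1} = 2 r_k. If A(λ^{k+1}, r_{k+1}) is nonempty, then q̃(λ^{k+1}, r_{k+1}) ≥ q̃(λᵏ, r_k); moreover, if (λᵏ, r_k) is not an optimal dual solution and the element of A(λ^{k+1}, r_{k+1}) has second coordinate zero, then the inequality is strict. -/

import Mathlib

/-!
For fixed `x`, the function `t ↦ r/(2t)‖h x‖² + r t/2` is minimised at `t = ‖h x‖`, so a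
minimiser `(x₁, t₁)` of `L̃_{λ,r}` with `t₁ > 0` satisfies `‖h x₁‖ = t₁`. The update
`λ ↦ λ + (r/t₁) h x₁` therefore moves `λ` by exactly `r = 2r - r`, which is what doubling `r`
pays for: `L̃_{λ,r} ≤ L̃_{λ',r'}` pointwise whenever `‖λ' - λ‖ ≤ r' - r`, by Cauchy–Schwarz and
AM–GM. For the strict part, a minimiser `(x, 0)` of `L̃_{λ,r}` makes `q̃(λ, r) = L̃(x, 0)`, a value
shared by every `L̃_{λ',r'}`, so `(λ, r)` is already an optimal dual solution.
-/

noncomputable section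

open Classical in
/-- The extended-real-valued smoothing function `L̃_{λ,r}(x,t)`. -/
def Ltilde {n m : ℕ} (f : EuclideanSpace ℝ (Fin n) → ℝ)
    (h : EuclideanSpace ℝ (Fin n) → EuclideanSpace ℝ (Fin m))
    (lam : EuclideanSpace ℝ (Fin m)) (r : ℝ)
    (x : EuclideanSpace ℝ (Fin n)) (t : ℝ) : EReal :=
  if 0 < t then
    (((f x + (inner ℝ lam (h x) : ℝ) + r / (2 * t) * ‖h x‖ ^ 2 + r / 2 * t) : ℝ) : EReal)
  else if t = 0 ∧ h x = 0 then ((f x : ℝ) : EReal)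
  else ⊤

/-- The augmented dual function `q̃(λ, r) = inf_{(x,t)} L̃_{λ,r}(x,t)`. -/
def qtilde {n m : ℕ} (f : EuclideanSpace ℝ (Fin n) → ℝ)
    (h : EuclideanSpace ℝ (Fin n) → EuclideanSpace ℝ (Fin m))
    (lam : EuclideanSpace ℝ (Fin m)) (r : ℝ) : EReal :=
  ⨅ p : EuclideanSpace ℝ (Fin n) × ℝ, Ltilde f h lam r p.1 p.2

/-- The set `A(λ, r)` of global minimizers of `L̃_{λ,r}`. -/
def Aset {n m : ℕ} (f : EuclideanSpace ℝ (Fin n) → ℝ)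
    (h : EuclideanSpace ℝ (Fin n) → EuclideanSpace ℝ (Fin m))
    (lam : EuclideanSpace ℝ (Fin m)) (r : ℝ) :
    Set (EuclideanSpace ℝ (Fin n) × ℝ) :=
  {p | Ltilde f h lam r p.1 p.2 = qtilde f h lam r}

lemma div_two_mul_mul_sq_add_eq (r a : ℝ) {t : ℝ} (ht : t ≠ 0) :
    r / (2 * t) * a ^ 2 + r / 2 * t = r * a + r * (a - t) ^ 2 / (2 * t) := by
  field_simp
  ring

section Ltilde

variable {n m : ℕ} {f : EuclideanSpace ℝ (Fin n) → ℝ}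
  {h : EuclideanSpace ℝ (Fin n) → EuclideanSpace ℝ (Fin m)}
  {lam lam' : EuclideanSpace ℝ (Fin m)} {r r' : ℝ} {x : EuclideanSpace ℝ (Fin n)} {t : ℝ}

lemma Ltilde_of_pos (ht : 0 < t) :
    Ltilde f h lam r x t =
      ((f x + inner ℝ lam (h x) + r / (2 * t) * ‖h x‖ ^ 2 + r / 2 * t : ℝ) : EReal) :=
  if_pos ht

lemma Ltilde_of_nonpos (ht : t ≤ 0) : Ltilde f h lam r x t = Ltilde f h lam' r' x t := by
  simp only [Ltilde, if_neg ht.not_gt]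

lemma Ltilde_norm :
    Ltilde f h lam r x ‖h x‖ = ((f x + inner ℝ lam (h x) + r * ‖h x‖ : ℝ) : EReal) := by
  by_cases hx : h x = 0
  · simp [Ltilde, hx]
  · rw [Ltilde_of_pos (norm_pos_iff.mpr hx), EReal.coe_eq_coe_iff]
    have : ‖h x‖ ≠ 0 := norm_ne_zero_iff.mpr hx
    field_simp
    ring

lemma qtilde_le_Ltilde (x : EuclideanSpace ℝ (Fin n)) (t : ℝ) :
    qtilde f h lam r ≤ Ltilde f h lam r x t :=
  iInf_le (fun p : EuclideanSpace ℝ (Fin n) × ℝ => Ltilde f h lam r p.1 p.2) (x, t)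

lemma Ltilde_mono (hstep : ‖lam' - lam‖ ≤ r' - r) :
    Ltilde f h lam r x t ≤ Ltilde f h lam' r' x t := by
  rcases le_or_gt t 0 with ht | ht
  · exact (Ltilde_of_nonpos ht).le
  rw [Ltilde_of_pos ht, Ltilde_of_pos ht, EReal.coe_le_coe_iff]
  have hinner : inner ℝ lam' (h x) = inner ℝ lam (h x) + inner ℝ (lam' - lam) (h x) := by
    rw [inner_sub_left]; ring
  have hcs : -((r' - r) * ‖h x‖) ≤ inner ℝ (lam' - lam) (h x) :=
    le_trans (neg_le_neg (mul_le_mul_of_nonneg_right hstep (norm_nonneg _)))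
      (neg_le_of_abs_le (abs_real_inner_le_norm _ _))
  have hamgm : (r' - r) * ‖h x‖ ≤ (r' - r) / (2 * t) * ‖h x‖ ^ 2 + (r' - r) / 2 * t := by
    rw [div_two_mul_mul_sq_add_eq _ _ ht.ne']
    have : 0 ≤ r' - r := (norm_nonneg _).trans hstep
    have : 0 ≤ (r' - r) * (‖h x‖ - t) ^ 2 / (2 * t) := by positivity
    linarith
  have hsplit : r' / (2 * t) * ‖h x‖ ^ 2 + r' / 2 * t = r / (2 * t) * ‖h x‖ ^ 2 + r / 2 * t
      + ((r' - r) / (2 * t) * ‖h x‖ ^ 2 + (r' - r) / 2 * t) := by ring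
  linarith

lemma qtilde_mono (hstep : ‖lam' - lam‖ ≤ r' - r) : qtilde f h lam r ≤ qtilde f h lam' r' :=
  iInf_mono fun _ => Ltilde_mono hstep

lemma norm_eq_of_mem_Aset (hr : 0 < r) (ht : 0 < t) (hA : (x, t) ∈ Aset f h lam r) :
    ‖h x‖ = t := by
  have hle : Ltilde f h lam r x t ≤ Ltilde f h lam r x ‖h x‖ :=
    (hA : Ltilde f h lam r x t = _) ▸ qtilde_le_Ltilde x ‖h x‖
  rw [Ltilde_of_pos ht, Ltilde_norm, EReal.coe_le_coe_iff] at hle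
  have hgap : r * (‖h x‖ - t) ^ 2 / (2 * t) = 0 := by
    have := div_two_mul_mul_sq_add_eq r ‖h x‖ ht.ne'
    exact le_antisymm (by linarith) (by positivity)
  simpa [hr.ne', ht.ne', sub_eq_zero] using hgap

lemma qtilde_le_of_mem_Aset_zero (hA : (x, 0) ∈ Aset f h lam r)
    (lam' : EuclideanSpace ℝ (Fin m)) (r' : ℝ) : qtilde f h lam' r' ≤ qtilde f h lam r :=
  (qtilde_le_Ltilde x 0).trans_eq <| (Ltilde_of_nonpos le_rfl).trans hA

end Ltilde

theorem stmt5_general {n m : ℕ} (f : EuclideanSpace ℝ (Fin n) → ℝ)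
    (h : EuclideanSpace ℝ (Fin n) → EuclideanSpace ℝ (Fin m))
    (lamk : EuclideanSpace ℝ (Fin m)) (rk : ℝ) (hrk : 0 < rk)
    (x1 : EuclideanSpace ℝ (Fin n)) (t1 : ℝ) (ht1 : 0 < t1)
    (hmem : (x1, t1) ∈ Aset f h lamk rk)
    (lam1 : EuclideanSpace ℝ (Fin m)) (r1 : ℝ)
    (hlam1 : lam1 = lamk + (rk / t1) • h x1) (hr1 : r1 = 2 * rk) :
    qtilde f h lamk rk ≤ qtilde f h lam1 r1 ∧
    ((¬ ∀ (lam : EuclideanSpace ℝ (Fin m)) (r : ℝ), 0 < r →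
        qtilde f h lam r ≤ qtilde f h lamk rk) →
      (∃ p ∈ Aset f h lam1 r1, p.2 = (0 : ℝ)) →
      qtilde f h lamk rk < qtilde f h lam1 r1) := by
  have hstep : ‖lam1 - lamk‖ ≤ r1 - rk := by
    rw [hlam1, hr1, add_sub_cancel_left, norm_smul, norm_eq_of_mem_Aset hrk ht1 hmem,
      Real.norm_of_nonneg (div_pos hrk ht1).le, div_mul_cancel₀ _ ht1.ne']
    linarith
  refine ⟨qtilde_mono hstep, fun hnotopt ⟨⟨x, t⟩, hA, ht⟩ => ?_⟩
  obtain rfl : t = 0 := ht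
  push Not at hnotopt
  obtain ⟨lam, r, -, hlt⟩ := hnotopt
  exact hlt.trans_le (qtilde_le_of_mem_Aset_zero hA lam r)

/-- one step of the modified subgradient update does not decrease the dual
function; if moreover `(λᵏ, r_k)` is not an optimal dual solution and the element of
`A(λ^{k+1}, r_{k+1})` has second coordinate zero, the increase is strict. -/
theorem stmt5 {n m : ℕ} (f : EuclideanSpace ℝ (Fin n) → ℝ)
    (h : EuclideanSpace ℝ (Fin n) → EuclideanSpace ℝ (Fin m))
    (hf : ContDiff ℝ 2 f) (hh : ContDiff ℝ 2 h)
    (lamk : EuclideanSpace ℝ (Fin m)) (rk : ℝ) (hrk : 0 < rk)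
    (x1 : EuclideanSpace ℝ (Fin n)) (t1 : ℝ) (ht1 : 0 < t1)
    (hmem : (x1, t1) ∈ Aset f h lamk rk)
    (lam1 : EuclideanSpace ℝ (Fin m)) (r1 : ℝ)
    (hlam1 : lam1 = lamk + (rk / t1) • h x1) (hr1 : r1 = 2 * rk)
    (hAne : (Aset f h lam1 r1).Nonempty) :
    qtilde f h lamk rk ≤ qtilde f h lam1 r1 ∧
    ((¬ ∀ (lam : EuclideanSpace ℝ (Fin m)) (r : ℝ), 0 < r →
        qtilde f h lam r ≤ qtilde f h lamk rk) →
      (∃ p ∈ Aset f h lam1 r1, p.2 = (0 : ℝ)) →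
      qtilde f h lamk rk < qtilde f h lam1 r1) :=
  stmt5_general f h lamk rk hrk x1 t1 ht1 hmem lam1 r1 hlam1 hr1
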